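/- arXiv:1907.03214 — 3 statements merged into one kernel-verified Lean document; each statement's English description precedes it below -/
import Mathlib

section
/- With the Clifford module setup below, for every ℝ-linear map θ : V → S and every η = (η₁, η₂) ∈ ℝ², one has Σ_{i=1}^n ‖P_η(e_i, θ)‖² = η₁² Σ_{i=1}^n ‖θ(e_i)‖² + η₂(nη₂ − 2η₁) ‖Dθ‖². -/
open scoped InnerProductSpace

/-- With the pointwise Dirac-bundle (Clifford module) setup, for every ℝ-linear
`θ : V → S` and every `η = (η₁, η₂) ∈ ℝ²`, one has
`Σᵢ ‖P_η(eᵢ, θ)‖² = η₁² Σᵢ ‖θ(eᵢ)‖² + η₂(nη₂ − 2η₁)‖Dθ‖²`, where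
`Dθ := Σᵢ eᵢ·θ(eᵢ)` and `P_η(eᵢ, θ) := η₁ θ(eᵢ) + η₂ eᵢ·Dθ`. -/
theorem stmt_5
    {V : Type*} [NormedAddCommGroup V] [InnerProductSpace ℝ V]
    {S : Type*} [NormedAddCommGroup S] [InnerProductSpace ℂ S]
    (n : ℕ) (hn : 0 < n) (e : Fin n → V) (he : Orthonormal ℝ e)
    (hbasis : ⊤ ≤ Submodule.span ℝ (Set.range e))
    (c : V →ₗ[ℝ] S →ₗ[ℝ] S)
    (hCl : ∀ (v w : V) (s : S), c v (c w s) + c w (c v s) = (-(2 * ⟪v, w⟫_ℝ)) • s)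
    (hSkew : ∀ (v : V) (s t : S), ⟪c v s, t⟫_ℂ = -⟪s, c v t⟫_ℂ)
    (θ : V →ₗ[ℝ] S) (η₁ η₂ : ℝ) :
    ∑ i, ‖η₁ • θ (e i) + η₂ • c (e i) (∑ j, c (e j) (θ (e j)))‖ ^ 2 =
      η₁ ^ 2 * ∑ i, ‖θ (e i)‖ ^ 2 +
        η₂ * ((n : ℝ) * η₂ - 2 * η₁) * ‖∑ j, c (e j) (θ (e j))‖ ^ 2 := by
  set D : S := ∑ j, c (e j) (θ (e j)) with hD
  have hone : ∀ i : Fin n, ⟪e i, e i⟫_ℝ = 1 := by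
    intro i
    rw [real_inner_self_eq_norm_sq, he.1 i]; norm_num
  have hsq : ∀ i : Fin n, c (e i) (c (e i) D) = -D := by
    intro i
    have h := hCl (e i) (e i) D
    rw [hone i] at h
    have h2 : (2:ℝ) • c (e i) (c (e i) D) = (2:ℝ) • (-D) := by
      rw [two_smul]; rw [h]; norm_num [two_smul]
    exact smul_right_injective S (by norm_num) h2
  have hinner : ∀ (r s : ℝ) (a b : S), ⟪r • a, s • b⟫_ℂ = (r*s) • ⟪a, b⟫_ℂ := by
    intro r s a b
    rw [RCLike.real_smul_eq_coe_smul (K := ℂ) r, RCLike.real_smul_eq_coe_smul (K := ℂ) s,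
      inner_smul_left, inner_smul_right]
    simp [smul_smul, Complex.real_smul, mul_comm, mul_assoc]
  have hnorm : ∀ i : Fin n, ‖c (e i) D‖ ^ 2 = ‖D‖ ^ 2 := by
    intro i
    have h : ⟪c (e i) D, c (e i) D⟫_ℂ = ⟪D, D⟫_ℂ := by
      rw [hSkew, hsq, inner_neg_right, neg_neg]
    rw [inner_self_eq_norm_sq_to_K, inner_self_eq_norm_sq_to_K] at h
    exact_mod_cast h
  have hcross : ∑ i, RCLike.re ⟪θ (e i), c (e i) D⟫_ℂ = -‖D‖ ^ 2 := by
    have h1 : ∀ i : Fin n, ⟪θ (e i), c (e i) D⟫_ℂ = -⟪c (e i) (θ (e i)), D⟫_ℂ := by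
      intro i; rw [hSkew]; ring
    have h2 : ∑ i, ⟪θ (e i), c (e i) D⟫_ℂ = -⟪D, D⟫_ℂ := by
      rw [Finset.sum_congr rfl fun i _ => h1 i]
      rw [Finset.sum_neg_distrib, ← sum_inner]
    have h3 := congrArg RCLike.re h2
    rw [map_sum] at h3
    rw [h3, inner_self_eq_norm_sq_to_K]
    simp [← Complex.ofReal_pow]
  have hterm : ∀ i : Fin n,
      ‖η₁ • θ (e i) + η₂ • c (e i) D‖ ^ 2 =
        η₁ ^ 2 * ‖θ (e i)‖ ^ 2 + 2 * (η₁ * η₂) * RCLike.re ⟪θ (e i), c (e i) D⟫_ℂ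
          + η₂ ^ 2 * ‖D‖ ^ 2 := by
    intro i
    rw [norm_add_sq (𝕜 := ℂ), hinner, norm_smul, norm_smul, RCLike.smul_re]
    rw [mul_pow, mul_pow, hnorm i]
    simp only [Real.norm_eq_abs, sq_abs]
    ring
  rw [Finset.sum_congr rfl fun i _ => hterm i]
  rw [Finset.sum_add_distrib, Finset.sum_add_distrib, ← Finset.mul_sum, ← Finset.mul_sum, hcross,
    Finset.sum_const, Finset.card_univ, Fintype.card_fin, nsmul_eq_mul]
  ring
end

section
/- With the Clifford module setup below, for every ℝ-linear map θ : V → S, every s ∈ S, every w ∈ V and every η = (η₁, η₂) ∈ ℝ², one has Σ_{i=1}^n ‖P_η(e_i, θ) − η₁⟪e_i, w⟫ s − η₂ e_i·(w·s)‖² = Σ_{i=1}^n ‖P_η(e_i, θ)‖² + (η₁² − 2η₁η₂ + nη₂²) ‖w‖² ‖s‖² + 2η₂(2η₁ − nη₂) Re⟨Dθ, w·s⟩ − 2η₁² Re⟨θ(w), s⟩. -/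
open scoped InnerProductSpace

/-- With the pointwise Dirac-bundle (Clifford module) setup, for every ℝ-linear
`θ : V → S`, `s ∈ S`, `w ∈ V` and `η = (η₁, η₂) ∈ ℝ²`, one has
`Σᵢ ‖P_η(eᵢ, θ) − η₁⟪eᵢ, w⟫ s − η₂ eᵢ·(w·s)‖²
  = Σᵢ ‖P_η(eᵢ, θ)‖² + (η₁² − 2η₁η₂ + nη₂²)‖w‖²‖s‖²
    + 2η₂(2η₁ − nη₂) Re⟨Dθ, w·s⟩ − 2η₁² Re⟨θ(w), s⟩`,
where `Dθ := Σᵢ eᵢ·θ(eᵢ)` and `P_η(eᵢ, θ) := η₁ θ(eᵢ) + η₂ eᵢ·Dθ`. -/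
theorem stmt_7
    {V : Type*} [NormedAddCommGroup V] [InnerProductSpace ℝ V]
    {S : Type*} [NormedAddCommGroup S] [InnerProductSpace ℂ S]
    (n : ℕ) (hn : 0 < n) (e : Fin n → V) (he : Orthonormal ℝ e)
    (hbasis : ⊤ ≤ Submodule.span ℝ (Set.range e))
    (c : V →ₗ[ℝ] S →ₗ[ℝ] S)
    (hCl : ∀ (v w : V) (s : S), c v (c w s) + c w (c v s) = (-(2 * ⟪v, w⟫_ℝ)) • s)
    (hSkew : ∀ (v : V) (s t : S), ⟪c v s, t⟫_ℂ = -⟪s, c v t⟫_ℂ)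
    (θ : V →ₗ[ℝ] S) (s : S) (w : V) (η₁ η₂ : ℝ) :
    ∑ i, ‖(η₁ • θ (e i) + η₂ • c (e i) (∑ j, c (e j) (θ (e j))))
            - (η₁ * ⟪e i, w⟫_ℝ) • s - η₂ • c (e i) (c w s)‖ ^ 2 =
      (∑ i, ‖η₁ • θ (e i) + η₂ • c (e i) (∑ j, c (e j) (θ (e j)))‖ ^ 2)
        + (η₁ ^ 2 - 2 * η₁ * η₂ + (n : ℝ) * η₂ ^ 2) * ‖w‖ ^ 2 * ‖s‖ ^ 2
        + 2 * η₂ * (2 * η₁ - (n : ℝ) * η₂) *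
            (⟪∑ j, c (e j) (θ (e j)), c w s⟫_ℂ).re
        - 2 * η₁ ^ 2 * (⟪θ w, s⟫_ℂ).re := by
  letI : InnerProductSpace ℝ S := InnerProductSpace.rclikeToReal ℂ S
  have hre : ∀ x y : S, ⟪x, y⟫_ℝ = (⟪x, y⟫_ℂ).re := fun x y => rfl
  set D : S := ∑ j, c (e j) (θ (e j)) with hD
  have skewR : ∀ (v : V) (x y : S), ⟪c v x, y⟫_ℝ = -⟪x, c v y⟫_ℝ := by
    intro v x y
    rw [hre, hre, hSkew]
    simp
  have sq1 : ∀ (v : V) (x : S), c v (c v x) = (-⟪v, v⟫_ℝ) • x := by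
    intro v x
    have h := hCl v v x
    have h2 : (2:ℝ) • c v (c v x) = (2:ℝ) • ((-⟪v, v⟫_ℝ) • x) := by
      rw [two_smul, h, smul_smul]
      congr 1
      ring
    exact smul_right_injective S two_ne_zero h2
  have pair : ∀ (v : V) (x y : S), ⟪c v x, c v y⟫_ℝ = ⟪v, v⟫_ℝ * ⟪x, y⟫_ℝ := by
    intro v x y
    rw [skewR, sq1, real_inner_smul_right]
    ring
  have normc : ∀ (v : V) (x : S), ‖c v x‖ ^ 2 = ‖v‖ ^ 2 * ‖x‖ ^ 2 := by
    intro v x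
    have h := pair v x x
    rw [real_inner_self_eq_norm_sq, real_inner_self_eq_norm_sq,
      real_inner_self_eq_norm_sq] at h
    exact h
  have he1 : ∀ i, ⟪e i, e i⟫_ℝ = (1:ℝ) := fun i => by
    rw [real_inner_self_eq_norm_sq, he.1 i, one_pow]
  have w_expand : ∑ i, ⟪e i, w⟫_ℝ • e i = w := by
    set T : V →ₗ[ℝ] V :=
      (∑ i, ((innerSL ℝ (e i)).toLinearMap).smulRight (e i)) - LinearMap.id with hT
    have hk : Submodule.span ℝ (Set.range e) ≤ LinearMap.ker T := by
      rw [Submodule.span_le]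
      rintro _ ⟨j, rfl⟩
      simp [hT, LinearMap.sum_apply, orthonormal_iff_ite.mp he, Finset.sum_ite_eq]
    have h0 : T w = 0 := hk (hbasis Submodule.mem_top)
    have h1 : (∑ i, ⟪e i, w⟫_ℝ • e i) - w = 0 := by
      simpa [hT, LinearMap.sum_apply, real_inner_comm] using h0
    exact sub_eq_zero.mp h1
  have hθw : θ w = ∑ i, ⟪e i, w⟫_ℝ • θ (e i) := by
    conv_lhs => rw [← w_expand]
    rw [map_sum]
    exact Finset.sum_congr rfl fun i _ => map_smul θ _ _
  have hcw : ∀ x : S, c w x = ∑ i, ⟪e i, w⟫_ℝ • c (e i) x := by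
    intro x
    conv_lhs => rw [← w_expand]
    rw [map_sum, LinearMap.sum_apply]
    exact Finset.sum_congr rfl fun i _ => by rw [map_smul, LinearMap.smul_apply]
  have parseval : ∑ i, ⟪e i, w⟫_ℝ * ⟪e i, w⟫_ℝ = ‖w‖ ^ 2 := by
    rw [← real_inner_self_eq_norm_sq]
    nth_rewrite 3 [← w_expand]
    rw [sum_inner]
    exact Finset.sum_congr rfl fun i _ => (real_inner_smul_left _ _ _).symm
  have hsumL : ∀ (x y : S), ∑ i, ⟪e i, w⟫_ℝ * ⟪c (e i) x, y⟫_ℝ = ⟪c w x, y⟫_ℝ := by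
    intro x y
    rw [hcw x, sum_inner]
    exact Finset.sum_congr rfl fun i _ => (real_inner_smul_left _ _ _).symm
  have hsumR : ∀ (x y : S), ∑ i, ⟪e i, w⟫_ℝ * ⟪x, c (e i) y⟫_ℝ = ⟪x, c w y⟫_ℝ := by
    intro x y
    rw [hcw y, inner_sum]
    exact Finset.sum_congr rfl fun i _ => (real_inner_smul_right _ _ _).symm
  have hsumθ : ∑ i, ⟪e i, w⟫_ℝ * ⟪θ (e i), s⟫_ℝ = ⟪θ w, s⟫_ℝ := by
    rw [hθw, sum_inner]
    exact Finset.sum_congr rfl fun i _ => (real_inner_smul_left _ _ _).symm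
  -- the B-norm terms
  have hcww : ⟪s, c w (c w s)⟫_ℝ = -(‖w‖ ^ 2 * ‖s‖ ^ 2) := by
    rw [sq1, real_inner_smul_right, real_inner_self_eq_norm_sq, real_inner_self_eq_norm_sq]
    ring
  have hBi : ∀ i, ‖(η₁ * ⟪e i, w⟫_ℝ) • s + η₂ • c (e i) (c w s)‖ ^ 2
      = (η₁ ^ 2 * ‖s‖ ^ 2) * (⟪e i, w⟫_ℝ * ⟪e i, w⟫_ℝ)
        + (2 * η₁ * η₂) * (⟪e i, w⟫_ℝ * ⟪s, c (e i) (c w s)⟫_ℝ)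
        + η₂ ^ 2 * (‖w‖ ^ 2 * ‖s‖ ^ 2) := by
    intro i
    rw [norm_add_sq_real, real_inner_smul_left, real_inner_smul_right,
      norm_smul, norm_smul, mul_pow, mul_pow, normc, normc, he.1 i]
    simp only [Real.norm_eq_abs, sq_abs]
    ring
  have SBB : ∑ i, ‖(η₁ * ⟪e i, w⟫_ℝ) • s + η₂ • c (e i) (c w s)‖ ^ 2
      = (η₁ ^ 2 - 2 * η₁ * η₂ + (n : ℝ) * η₂ ^ 2) * (‖w‖ ^ 2 * ‖s‖ ^ 2) := by
    rw [Finset.sum_congr rfl fun i _ => hBi i, Finset.sum_add_distrib,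
      Finset.sum_add_distrib, ← Finset.mul_sum, ← Finset.mul_sum, parseval,
      Finset.sum_const, Finset.card_fin, hsumR s (c w s), hcww]
    simp only [nsmul_eq_mul]
    ring
  -- the cross terms
  have hABi : ∀ i, ⟪η₁ • θ (e i) + η₂ • c (e i) D,
        (η₁ * ⟪e i, w⟫_ℝ) • s + η₂ • c (e i) (c w s)⟫_ℝ
      = (η₁ * η₁) * (⟪e i, w⟫_ℝ * ⟪θ (e i), s⟫_ℝ)
        + (η₁ * η₂) * (-⟪c (e i) (θ (e i)), c w s⟫_ℝ)
        + (η₁ * η₂) * (⟪e i, w⟫_ℝ * ⟪c (e i) D, s⟫_ℝ)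
        + (η₂ * η₂) * ⟪D, c w s⟫_ℝ := by
    intro i
    rw [inner_add_left, inner_add_right, inner_add_right]
    simp only [real_inner_smul_left, real_inner_smul_right]
    rw [show ⟪θ (e i), c (e i) (c w s)⟫_ℝ = -⟪c (e i) (θ (e i)), c w s⟫_ℝ by
        rw [skewR]; ring,
      pair (e i) D (c w s), he1 i]
    ring
  have SAB : ∑ i, ⟪η₁ • θ (e i) + η₂ • c (e i) D,
        (η₁ * ⟪e i, w⟫_ℝ) • s + η₂ • c (e i) (c w s)⟫_ℝ
      = η₁ ^ 2 * ⟪θ w, s⟫_ℝ + ((n : ℝ) * η₂ ^ 2 - 2 * η₁ * η₂) * ⟪D, c w s⟫_ℝ := by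
    rw [Finset.sum_congr rfl fun i _ => hABi i, Finset.sum_add_distrib,
      Finset.sum_add_distrib, Finset.sum_add_distrib, ← Finset.mul_sum,
      ← Finset.mul_sum, ← Finset.mul_sum, hsumθ, hsumL D s,
      Finset.sum_const, Finset.card_fin]
    have hDsum : ∑ i, ⟪c (e i) (θ (e i)), c w s⟫_ℝ = ⟪D, c w s⟫_ℝ := by
      rw [hD, sum_inner]
    rw [Finset.sum_neg_distrib, hDsum, skewR w D s]
    simp only [nsmul_eq_mul]
    ring
  -- assemble
  simp only [sub_sub]
  have expand : ∀ i : Fin n, ‖(η₁ • θ (e i) + η₂ • c (e i) D)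
        - ((η₁ * ⟪e i, w⟫_ℝ) • s + η₂ • c (e i) (c w s))‖ ^ 2
      = ‖η₁ • θ (e i) + η₂ • c (e i) D‖ ^ 2
        - 2 * ⟪η₁ • θ (e i) + η₂ • c (e i) D,
            (η₁ * ⟪e i, w⟫_ℝ) • s + η₂ • c (e i) (c w s)⟫_ℝ
        + ‖(η₁ * ⟪e i, w⟫_ℝ) • s + η₂ • c (e i) (c w s)‖ ^ 2 :=
    fun i => norm_sub_sq_real _ _
  rw [Finset.sum_congr rfl fun i _ => expand i, Finset.sum_add_distrib,
    Finset.sum_sub_distrib, ← Finset.mul_sum, SAB, SBB, ← hre, ← hre]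
  ring
end

section
/- Let H be a complex inner product space, and let A, J : H → H be ℂ-linear maps such that A is symmetric (⟨A x, y⟩ = ⟨x, A y⟩ for all x, y ∈ H), J preserves the inner product (⟨J x, J y⟩ = ⟨x, y⟩ for all x, y ∈ H), and A ∘ J = −J ∘ A. Let b ≥ 0 be real, and let W, U ⊆ H be subspaces with A(W) ⊆ W, A(U) ⊆ U, W orthogonal to J(W), U orthogonal to both W and J(W), and ⟨A u, u⟩ ≤ b ‖u‖² for all u ∈ U. Then for every t₁ ∈ W, u ∈ U and ε ∈ {1, −1}, the element t = t₁ + u + ε J t₁ satisfies Re⟨A t, t⟩ ≤ b ‖t‖². -/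
open scoped InnerProductSpace

/-- Let `H` be a complex inner product space, `A, J : H → H` ℂ-linear with `A` symmetric,
`J` inner-product preserving, and `A ∘ J = −J ∘ A`. Let `b ≥ 0` and `W, U ⊆ H` subspaces
with `A(W) ⊆ W`, `A(U) ⊆ U`, `W ⊥ J(W)`, `U` orthogonal to both `W` and `J(W)`, and
`⟨A u, u⟩ ≤ b‖u‖²` on `U`. Then for every `t₁ ∈ W`, `u ∈ U`, `ε ∈ {1, −1}`, the element
`t = t₁ + u + ε J t₁` satisfies `Re⟨A t, t⟩ ≤ b‖t‖²`. -/
theorem stmt_11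
    {H : Type*} [NormedAddCommGroup H] [InnerProductSpace ℂ H]
    (A J : H →ₗ[ℂ] H)
    (hA : ∀ x y : H, ⟪A x, y⟫_ℂ = ⟪x, A y⟫_ℂ)
    (hJ : ∀ x y : H, ⟪J x, J y⟫_ℂ = ⟪x, y⟫_ℂ)
    (hAJ : ∀ x : H, A (J x) = -J (A x))
    (b : ℝ) (hb : 0 ≤ b)
    (W U : Submodule ℂ H)
    (hAW : ∀ x ∈ W, A x ∈ W)
    (hAU : ∀ x ∈ U, A x ∈ U)
    (hWJ : ∀ x ∈ W, ∀ y ∈ W, ⟪x, J y⟫_ℂ = 0)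
    (hUW : ∀ u ∈ U, ∀ x ∈ W, ⟪u, x⟫_ℂ = 0)
    (hUJW : ∀ u ∈ U, ∀ x ∈ W, ⟪u, J x⟫_ℂ = 0)
    (hUb : ∀ u ∈ U, (⟪A u, u⟫_ℂ).re ≤ b * ‖u‖ ^ 2)
    (t₁ : H) (ht₁ : t₁ ∈ W) (u : H) (hu : u ∈ U) (ε : ℝ) (hε : ε = 1 ∨ ε = -1) :
    (⟪A (t₁ + u + ε • J t₁), t₁ + u + ε • J t₁⟫_ℂ).re ≤
      b * ‖t₁ + u + ε • J t₁‖ ^ 2 := by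
  have hε2 : ε * ε = 1 := by rcases hε with h | h <;> rw [h] <;> norm_num
  have hεc : (ε : ℂ) ^ 2 = 1 := by
    rw [sq]; exact_mod_cast hε2
  have hsm : ∀ x : H, ε • x = (ε : ℂ) • x := fun x => by
    rw [← algebraMap_smul ℂ ε x, Complex.coe_algebraMap]
  -- zero inner products
  have z1 : ⟪A t₁, u⟫_ℂ = 0 := by
    rw [← inner_conj_symm, hUW u hu (A t₁) (hAW t₁ ht₁), map_zero]
  have z2 : ⟪A t₁, J t₁⟫_ℂ = 0 := hWJ (A t₁) (hAW t₁ ht₁) t₁ ht₁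
  have z3 : ⟪A u, t₁⟫_ℂ = 0 := hUW (A u) (hAU u hu) t₁ ht₁
  have z4 : ⟪A u, J t₁⟫_ℂ = 0 := hUJW (A u) (hAU u hu) t₁ ht₁
  have z5 : ⟪J (A t₁), t₁⟫_ℂ = 0 := by
    rw [← inner_conj_symm, hWJ t₁ ht₁ (A t₁) (hAW t₁ ht₁), map_zero]
  have z6 : ⟪J (A t₁), u⟫_ℂ = 0 := by
    rw [← inner_conj_symm, hUJW u hu (A t₁) (hAW t₁ ht₁), map_zero]
  have z7 : ⟪J (A t₁), J t₁⟫_ℂ = ⟪A t₁, t₁⟫_ℂ := hJ _ _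
  have n1 : ⟪t₁, u⟫_ℂ = 0 := by
    rw [← inner_conj_symm, hUW u hu t₁ ht₁, map_zero]
  have n1' : ⟪u, t₁⟫_ℂ = 0 := hUW u hu t₁ ht₁
  have n2 : ⟪t₁, J t₁⟫_ℂ = 0 := hWJ t₁ ht₁ t₁ ht₁
  have n2' : ⟪J t₁, t₁⟫_ℂ = 0 := by
    rw [← inner_conj_symm, n2, map_zero]
  have n3 : ⟪u, J t₁⟫_ℂ = 0 := hUJW u hu t₁ ht₁
  have n3' : ⟪J t₁, u⟫_ℂ = 0 := by
    rw [← inner_conj_symm, n3, map_zero]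
  have n4 : ⟪J t₁, J t₁⟫_ℂ = ⟪t₁, t₁⟫_ℂ := hJ _ _
  -- main inner product computation
  have key : ⟪A (t₁ + u + ε • J t₁), t₁ + u + ε • J t₁⟫_ℂ = ⟪A u, u⟫_ℂ := by
    rw [hsm]
    simp only [map_add, map_smul, hAJ, inner_add_left, inner_add_right,
      inner_smul_left, inner_smul_right, inner_neg_left, inner_neg_right,
      Complex.conj_ofReal, z1, z2, z3, z4, z5, z6, z7,
      mul_zero, zero_add, add_zero, neg_zero, neg_neg]
    ring_nf
    rw [hεc]
    ring
  -- norm computation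
  have hT : ⟪t₁ + u + ε • J t₁, t₁ + u + ε • J t₁⟫_ℂ
      = ⟪t₁, t₁⟫_ℂ + ⟪u, u⟫_ℂ + ⟪t₁, t₁⟫_ℂ := by
    rw [hsm]
    simp only [inner_add_left, inner_add_right, inner_smul_left, inner_smul_right,
      Complex.conj_ofReal, n1, n1', n2, n2', n3, n3', n4,
      mul_zero, zero_add, add_zero]
    ring_nf
    rw [hεc]
    ring
  have hnorm : ‖t₁ + u + ε • J t₁‖ ^ 2 = ‖t₁‖ ^ 2 + ‖u‖ ^ 2 + ‖t₁‖ ^ 2 := by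
    rw [inner_self_eq_norm_sq_to_K, inner_self_eq_norm_sq_to_K,
      inner_self_eq_norm_sq_to_K] at hT
    exact_mod_cast hT
  rw [key, hnorm]
  have h1 := hUb u hu
  have h2 : (0:ℝ) ≤ ‖t₁‖ ^ 2 := by positivity
  nlinarith
end
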